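/- For every natural number n, the number of relations R : Fin n → Fin n → Prop that are symmetric and satisfy (R x y → R x x for all x, y) equals ∑_{i=0}^{n} C(n, i) · 2^{i(i−1)/2}, where C(n, i) is the binomial coefficient. -/

import Mathlib

/-!
A positive relation `R` is determined by its support `s = {x | R x x}` together with the simple
graph `x ≠ y ∧ R x y` it induces on `s`, and every simple graph on every subset arises this way.
A simple graph on an `i`-element set is a set of non-diagonal unordered pairs, of which there are
`i.choose 2`; grouping the supports by their size gives the binomial sum.
-/

open Finset

theorem Nat.card_set (α : Type*) [Finite α] : Nat.card (Set α) = 2 ^ Nat.card α := by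
  rw [show Set α = (α → Prop) from rfl, Nat.card_fun, Nat.card_eq_fintype_card, Fintype.card_prop]

namespace SimpleGraph

def equivPowersetComplDiagSet (V : Type*) :
    SimpleGraph V ≃ 𝒫 (Sym2.diagSet : Set (Sym2 V))ᶜ where
  toFun G := ⟨G.edgeSet, G.edgeSet_subset_compl_diagSet⟩
  invFun s := fromEdgeSet s
  left_inv := fromEdgeSet_edgeSet
  right_inv s := Subtype.ext <| show (fromEdgeSet s.1).edgeSet = s.1 by
    rw [edgeSet_fromEdgeSet, sdiff_eq_left, ← Set.subset_compl_iff_disjoint_right]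
    exact s.2

theorem natCard_eq (V : Type*) [Finite V] :
    Nat.card (SimpleGraph V) = 2 ^ (Nat.card V).choose 2 := by
  rw [Nat.card_congr ((equivPowersetComplDiagSet V).trans (Equiv.Set.powerset _)),
    Nat.card_set, Nat.card_coe_set_eq, Sym2.ncard_diagSet_compl]

end SimpleGraph

/-- The states of `α` in CPM(Rel). -/
abbrev PositiveRel (α : Type*) := {R : α → α → Prop // Symmetric R ∧ ∀ x y, R x y → R x x}

namespace PositiveRel

variable {α : Type*}

def support (R : PositiveRel α) : Set α := {x | R.1 x x}

def fiberEquivSimpleGraph (s : Set α) :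
    {R : PositiveRel α // R.support = s} ≃ SimpleGraph s where
  toFun R :=
    { Adj x y := x ≠ y ∧ R.1.1 x y
      symm := ⟨fun _ _ h => ⟨h.1.symm, R.1.2.1 h.2⟩⟩
      loopless := ⟨fun _ h => h.1 rfl⟩ }
  invFun G :=
    ⟨⟨fun x y => ∃ (hx : x ∈ s) (hy : y ∈ s), x = y ∨ G.Adj ⟨x, hx⟩ ⟨y, hy⟩,
      fun _ _ ⟨hx, hy, h⟩ => ⟨hy, hx, h.imp Eq.symm G.adj_symm⟩,
      fun _ _ ⟨hx, _, _⟩ => ⟨hx, hx, .inl rfl⟩⟩,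
      Set.ext fun _ => ⟨fun ⟨hx, _, _⟩ => hx, fun hx => ⟨hx, hx, .inl rfl⟩⟩⟩
  left_inv := by
    rintro ⟨⟨R, hsymm, hrefl⟩, rfl⟩
    ext x y
    constructor
    · rintro ⟨hx, _, rfl | hxy⟩
      · exact hx
      · exact hxy.2
    · intro hxy
      exact ⟨hrefl x y hxy, hrefl y x (hsymm hxy),
        (em (x = y)).imp_right fun hne => ⟨Subtype.coe_ne_coe.mp hne, hxy⟩⟩
  right_inv G := by
    ext ⟨x, hx⟩ ⟨y, hy⟩
    constructor
    · rintro ⟨hne, _, _, rfl | hxy⟩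
      · exact absurd rfl hne
      · exact hxy
    · exact fun hxy => ⟨hxy.ne, hx, hy, .inr hxy⟩

def equivSigmaSimpleGraph (α : Type*) : PositiveRel α ≃ Σ s : Set α, SimpleGraph s :=
  (Equiv.sigmaFiberEquiv support).symm.trans (Equiv.sigmaCongrRight fiberEquivSimpleGraph)

theorem natCard_eq (α : Type*) [Fintype α] :
    Nat.card (PositiveRel α) =
      ∑ i ∈ range (Fintype.card α + 1), (Fintype.card α).choose i * 2 ^ i.choose 2 := by
  calc Nat.card (PositiveRel α)
      = Nat.card (Σ s : Finset α, SimpleGraph (Fintype.finsetEquivSet s)) :=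
        Nat.card_congr ((equivSigmaSimpleGraph α).trans
          (Equiv.sigmaCongrLeft Fintype.finsetEquivSet).symm)
    _ = ∑ s : Finset α, 2 ^ (#s).choose 2 := by
        simp [Nat.card_sigma, SimpleGraph.natCard_eq]
    _ = ∑ i ∈ range (Fintype.card α + 1), (Fintype.card α).choose i * 2 ^ i.choose 2 := by
        rw [← powerset_univ, sum_powerset_apply_card (fun i => 2 ^ i.choose 2), card_univ]
        simp only [smul_eq_mul]

end PositiveRel

/-- The number of states of an `n`-element set in CPM(Rel), i.e. relations on `Fin n`
that are symmetric and satisfy `R x y → R x x`, is `∑ i, C(n, i) * 2 ^ (i (i - 1) / 2)`. -/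
theorem card_states (n : ℕ) :
    Nat.card {R : Fin n → Fin n → Prop // Symmetric R ∧ ∀ x y, R x y → R x x} =
      ∑ i ∈ Finset.range (n + 1), n.choose i * 2 ^ (i * (i - 1) / 2) := by
  rw [PositiveRel.natCard_eq, Fintype.card_fin]
  simp_rw [Nat.choose_two_right]
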